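/- arXiv:1905.06602 — 5 statements merged into one kernel-verified Lean document; each statement's English description precedes it below -/
import Mathlib

section
/- Let 0 < x_C, x_D, y_C, y_D < 1 and define x_e = (x_D + (x_C - x_D)·y_D)/(1 - (x_C - x_D)(y_C - y_D)) and y_e = (y_D + (y_C - y_D)·x_D)/(1 - (x_C - x_D)(y_C - y_D)). Then the vector p_e = (x_e·y_e, x_e·(1-y_e), (1-x_e)·y_e, (1-x_e)·(1-y_e)) satisfies M·p_e = p_e, where M is the 4×4 Markov matrix with columns indexed by previous actions (CC, CD, DC, DD) and rows (CC, CD, DC, DD), given by M = [[x_C y_C, x_D y_C, x_C y_D, x_D y_D],[x_C(1-y_C), x_D(1-y_C), x_C(1-y_D), x_D(1-y_D)],[(1-x_C)y_C, (1-x_D)y_C, (1-x_C)y_D, (1-x_D)y_D],[(1-x_C)(1-y_C), (1-x_D)(1-y_C), (1-x_C)(1-y_D), (1-x_D)(1-y_D)]]. -/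
open Matrix

theorem markov_equilibrium
    (xC xD yC yD : ℝ)
    (hxC : 0 < xC) (hxC1 : xC < 1) (hxD : 0 < xD) (hxD1 : xD < 1)
    (hyC : 0 < yC) (hyC1 : yC < 1) (hyD : 0 < yD) (hyD1 : yD < 1)
    (xe ye : ℝ)
    (hxe : xe = (xD + (xC - xD) * yD) / (1 - (xC - xD) * (yC - yD)))
    (hye : ye = (yD + (yC - yD) * xD) / (1 - (xC - xD) * (yC - yD)))
    (M : Matrix (Fin 4) (Fin 4) ℝ)
    (hM : M = !![xC * yC, xD * yC, xC * yD, xD * yD;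
                 xC * (1 - yC), xD * (1 - yC), xC * (1 - yD), xD * (1 - yD);
                 (1 - xC) * yC, (1 - xD) * yC, (1 - xC) * yD, (1 - xD) * yD;
                 (1 - xC) * (1 - yC), (1 - xD) * (1 - yC), (1 - xC) * (1 - yD),
                   (1 - xD) * (1 - yD)])
    (pe : Fin 4 → ℝ)
    (hpe : pe = ![xe * ye, xe * (1 - ye), (1 - xe) * ye, (1 - xe) * (1 - ye)]) :
    M.mulVec pe = pe := by
  have hD : 1 - (xC - xD) * (yC - yD) ≠ 0 := by nlinarith
  have h1 : xe = xD + (xC - xD) * ye := by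
    rw [hxe, hye]; field_simp; ring
  have h2 : ye = yD + (yC - yD) * xe := by
    rw [hxe, hye, mul_div_assoc', add_div' _ _ _ hD, div_eq_div_iff hD hD]; ring
  subst hM hpe
  ext i
  fin_cases i <;>
    simp [mulVec, dotProduct, Fin.sum_univ_succ]
  · linear_combination (-ye) * h1 - (xD + (xC - xD) * ye) * h2
  · linear_combination (ye - 1) * h1 + (xD + (xC - xD) * ye) * h2
  · linear_combination ye * h1 + ((xD + (xC - xD) * ye) - 1) * h2
  · linear_combination (1 - ye) * h1 + (1 - (xD + (xC - xD) * ye)) * h2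
end

section
/- Under the assumptions 0 < x_C, x_D, y_C, y_D < 1, the sum u_C - u_D := Σ_{t=0}^∞ Mᵗ(p_{1C} - p_{1D}) · (R, S, T, P)ᵀ converges and equals [(y_C - y_D)·(x_e(R-S) + (1-x_e)(T-P)) - (y_e(T-R) + (1-y_e)(P-S))] / [1 - (x_C - x_D)(y_C - y_D)]. -/
/-!
Write `v = p1C - p1D` and `w = (xe, -xe, 1 - xe, xe - 1)`. Because `(xe, ye)` solves the linear
system `xe = xD + (xC - xD) ye`, `ye = yD + (yC - yD) xe`, the transition matrix swaps the two
directions: `M v = (yC - yD) w` and `M w = (xC - xD) v`. Hence `M² v = r v` with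
`r = (xC - xD)(yC - yD)`, `|r| < 1`, and the even and odd terms of the series are two geometric
series of ratio `r`.
-/

open Matrix

section TwoCycle

variable {n R : Type*} [Fintype n] [DecidableEq n] [CommRing R]

theorem Matrix.pow_mulVec_of_mulVec_eq_smul {A : Matrix n n R} {v : n → R} {c : R}
    (hv : A *ᵥ v = c • v) (k : ℕ) : A ^ k *ᵥ v = c ^ k • v := by
  induction k with
  | zero => simp
  | succ k ih => rw [pow_succ', ← mulVec_mulVec, ih, mulVec_smul, hv, smul_smul, pow_succ]

variable {A : Matrix n n R} {v w : n → R} {a b : R}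

theorem Matrix.sq_mulVec_of_swap (hv : A *ᵥ v = a • w) (hw : A *ᵥ w = b • v) :
    A ^ 2 *ᵥ v = (a * b) • v := by
  rw [sq, ← mulVec_mulVec, hv, mulVec_smul, hw, smul_smul]

theorem Matrix.pow_two_mul_mulVec_of_swap (hv : A *ᵥ v = a • w) (hw : A *ᵥ w = b • v)
    (k : ℕ) : A ^ (2 * k) *ᵥ v = (a * b) ^ k • v := by
  rw [pow_mul, pow_mulVec_of_mulVec_eq_smul (sq_mulVec_of_swap hv hw)]

theorem Matrix.pow_two_mul_add_one_mulVec_of_swap (hv : A *ᵥ v = a • w)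
    (hw : A *ᵥ w = b • v) (k : ℕ) : A ^ (2 * k + 1) *ᵥ v = ((a * b) ^ k * a) • w := by
  rw [pow_succ', ← mulVec_mulVec, pow_two_mul_mulVec_of_swap hv hw, mulVec_smul, hv,
    smul_smul]

end TwoCycle

theorem Matrix.hasSum_pow_mulVec_dotProduct_of_swap {n 𝕜 : Type*} [Fintype n] [DecidableEq n]
    [NormedField 𝕜]
    {A : Matrix n n 𝕜} {v w : n → 𝕜} {a b : 𝕜} (hv : A *ᵥ v = a • w) (hw : A *ᵥ w = b • v)
    (hab : ‖a * b‖ < 1) (c : n → 𝕜) :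
    HasSum (fun t : ℕ => A ^ t *ᵥ v ⬝ᵥ c) ((v ⬝ᵥ c + a * (w ⬝ᵥ c)) / (1 - a * b)) := by
  have hgeom := hasSum_geometric_of_norm_lt_one hab
  have heven : HasSum (fun k : ℕ => A ^ (2 * k) *ᵥ v ⬝ᵥ c) ((v ⬝ᵥ c) * (1 - a * b)⁻¹) := by
    refine (hgeom.mul_left (v ⬝ᵥ c)).congr_fun fun k => ?_
    rw [pow_two_mul_mulVec_of_swap hv hw, smul_dotProduct, smul_eq_mul, mul_comm]
  have hodd : HasSum (fun k : ℕ => A ^ (2 * k + 1) *ᵥ v ⬝ᵥ c)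
      (a * (w ⬝ᵥ c) * (1 - a * b)⁻¹) := by
    refine (hgeom.mul_left (a * (w ⬝ᵥ c))).congr_fun fun k => ?_
    rw [pow_two_mul_add_one_mulVec_of_swap hv hw, smul_dotProduct, smul_eq_mul]
    ring
  rw [div_eq_mul_inv, add_mul]
  exact HasSum.even_add_odd (f := fun t => A ^ t *ᵥ v ⬝ᵥ c) heven hodd

theorem payoff_difference_sum
    (T R P S : ℝ)
    (xC xD yC yD : ℝ)
    (hxC : 0 < xC) (hxC1 : xC < 1) (hxD : 0 < xD) (hxD1 : xD < 1)
    (hyC : 0 < yC) (hyC1 : yC < 1) (hyD : 0 < yD) (hyD1 : yD < 1)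
    (xe ye : ℝ)
    (hxe : xe = (xD + (xC - xD) * yD) / (1 - (xC - xD) * (yC - yD)))
    (hye : ye = (yD + (yC - yD) * xD) / (1 - (xC - xD) * (yC - yD)))
    (M : Matrix (Fin 4) (Fin 4) ℝ)
    (hM : M = !![xC * yC, xD * yC, xC * yD, xD * yD;
                 xC * (1 - yC), xD * (1 - yC), xC * (1 - yD), xD * (1 - yD);
                 (1 - xC) * yC, (1 - xD) * yC, (1 - xC) * yD, (1 - xD) * yD;
                 (1 - xC) * (1 - yC), (1 - xD) * (1 - yC), (1 - xC) * (1 - yD),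
                   (1 - xD) * (1 - yD)])
    (p1C p1D : Fin 4 → ℝ)
    (hp1C : p1C = ![ye, 1 - ye, 0, 0])
    (hp1D : p1D = ![0, 0, ye, 1 - ye]) :
    HasSum (fun t : ℕ => (M ^ t).mulVec (p1C - p1D) ⬝ᵥ ![R, S, T, P])
      (((yC - yD) * (xe * (R - S) + (1 - xe) * (T - P)) -
          (ye * (T - R) + (1 - ye) * (P - S))) /
        (1 - (xC - xD) * (yC - yD))) := by
  have hr : |(xC - xD) * (yC - yD)| < 1 := by
    rw [abs_mul]
    exact mul_lt_one_of_nonneg_of_lt_one_left (abs_nonneg _)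
      (abs_sub_lt_of_nonneg_of_lt hxC.le hxC1 hxD.le hxD1)
      (abs_sub_lt_of_nonneg_of_lt hyC.le hyC1 hyD.le hyD1).le
  have hne : 1 - (xC - xD) * (yC - yD) ≠ 0 := by linarith [le_abs_self ((xC - xD) * (yC - yD))]
  rw [eq_div_iff hne] at hxe hye
  have hxe_fixed : xe = xD + (xC - xD) * ye :=
    mul_left_cancel₀ hne (by linear_combination hxe - (xC - xD) * hye)
  have hye_fixed : ye = yD + (yC - yD) * xe :=
    mul_left_cancel₀ hne (by linear_combination hye - (yC - yD) * hxe)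
  set w : Fin 4 → ℝ := ![xe, -xe, 1 - xe, xe - 1]
  have hMv : M *ᵥ (p1C - p1D) = (yC - yD) • w := by
    subst hM hp1C hp1D
    ext i; fin_cases i <;> simp [mulVec, dotProduct, Fin.sum_univ_four, w, hxe_fixed] <;> ring
  have hMw : M *ᵥ w = (xC - xD) • (p1C - p1D) := by
    subst hM hp1C hp1D
    ext i; fin_cases i <;> simp [mulVec, dotProduct, Fin.sum_univ_four, w, hye_fixed] <;> ring
  have hvc : (p1C - p1D) ⬝ᵥ ![R, S, T, P] = -(ye * (T - R) + (1 - ye) * (P - S)) := by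
    simp [hp1C, hp1D, dotProduct, Fin.sum_univ_four]; ring
  have hwc : w ⬝ᵥ ![R, S, T, P] = xe * (R - S) + (1 - xe) * (T - P) := by
    simp [w, dotProduct, Fin.sum_univ_four]; ring
  have hsum := hasSum_pow_mulVec_dotProduct_of_swap hMv hMw
    (by rwa [Real.norm_eq_abs, mul_comm]) ![R, S, T, P]
  rwa [hvc, hwc, neg_add_eq_sub, mul_comm (yC - yD) (xC - xD)] at hsum
end

section
/- Let T > R > P > S. At the pure CC fixed point (x_e = y_e = 1, hence x_C = y_C = 1), the conditions u_C - u_D ≥ 0 and v_C - v_D ≥ 0 are equivalent to x_D ≤ 1 - (T-R)/(R-S) and y_D ≤ 1 - (T-R)/(R-S) respectively, using the payoff-difference formulas u_C - u_D = [(y_C-y_D)(x_e(R-S)+(1-x_e)(T-P)) - (y_e(T-R)+(1-y_e)(P-S))]/[1-(x_C-x_D)(y_C-y_D)] and symmetrically for v_C - v_D. -/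
theorem pure_CC_stability_condition
    (T R P S : ℝ) (hTR : T > R) (hRP : R > P) (hPS : P > S)
    (xD yD : ℝ) (hxD0 : 0 < xD) (hxD1 : xD ≤ 1) (hyD0 : 0 < yD) (hyD1 : yD ≤ 1)
    (xC yC xe ye : ℝ) (hxC : xC = 1) (hyC : yC = 1) (hxe : xe = 1) (hye : ye = 1)
    (uCD vCD : ℝ)
    (huCD : uCD = ((yC - yD) * (xe * (R - S) + (1 - xe) * (T - P)) -
      (ye * (T - R) + (1 - ye) * (P - S))) / (1 - (xC - xD) * (yC - yD)))
    (hvCD : vCD = ((xC - xD) * (ye * (R - S) + (1 - ye) * (T - P)) -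
      (xe * (T - R) + (1 - xe) * (P - S))) / (1 - (xC - xD) * (yC - yD))) :
    (uCD ≥ 0 ∧ vCD ≥ 0) ↔
      (xD ≤ 1 - (T - R) / (R - S) ∧ yD ≤ 1 - (T - R) / (R - S)) := by
  subst hxC hyC hxe hye huCD hvCD
  have hRS : (0:ℝ) < R - S := by linarith
  have hD : (0:ℝ) < 1 - (1 - xD) * (1 - yD) := by nlinarith
  have key : ∀ z : ℝ, ((1 - z) * (R - S) - (T - R) ≥ 0 ↔ z ≤ 1 - (T - R) / (R - S)) := by
    intro z
    rw [ge_iff_le, sub_nonneg, ← sub_nonneg (b := z), show 1 - (T - R) / (R - S) - z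
      = (1 - z) - (T - R) / (R - S) by ring, sub_nonneg, div_le_iff₀ hRS, mul_comm]
  constructor
  · rintro ⟨h1, h2⟩
    rw [ge_iff_le, le_div_iff₀ hD, zero_mul] at h1 h2
    constructor
    · rw [← key xD]; nlinarith
    · rw [← key yD]; nlinarith
  · rintro ⟨h1, h2⟩
    rw [← key xD] at h1
    rw [← key yD] at h2
    constructor <;> [skip; skip] <;>
      · rw [ge_iff_le, le_div_iff₀ hD, zero_mul]; nlinarith
end

section
/- Let T > R > P > S with 2R > T + S. Then the gradient identity (d/dx_e) u(x_e, f_y(x_e)) = (u_C - u_D)·(1 - (x_C - x_D)(y_C - y_D)) holds, where u(x, y) = xyR + x(1-y)S + (1-x)yT + (1-x)(1-y)P, f_y(x) = x(y_C - y_D) + y_D, and u_C - u_D is the payoff-difference [(y_C-y_D)(x_e(R-S)+(1-x_e)(T-P)) - (y_e(T-R)+(1-y_e)(P-S))]/[1-(x_C-x_D)(y_C-y_D)] evaluated at y_e = f_y(x_e). -/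
def pdPayoff (R S T P x y : ℝ) : ℝ :=
  x * y * R + x * (1 - y) * S + (1 - x) * y * T + (1 - x) * (1 - y) * P

/-- `∂u/∂x = -(y (T - R) + (1 - y) (P - S))` and `∂u/∂y = x (R - S) + (1 - x) (T - P)`. -/
theorem HasDerivAt.pdPayoff {R S T P : ℝ} {f : ℝ → ℝ} {f' x : ℝ} (hf : HasDerivAt f f' x) :
    HasDerivAt (fun t => pdPayoff R S T P t (f t))
      (f' * (x * (R - S) + (1 - x) * (T - P)) - (f x * (T - R) + (1 - f x) * (P - S))) x := by
  have hx := hasDerivAt_id' x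
  have h1x := hx.const_sub 1
  have h1f := hf.const_sub 1
  have h := ((((hx.mul hf).mul_const R).add ((hx.mul h1f).mul_const S)).add
    ((h1x.mul hf).mul_const T)).add ((h1x.mul h1f).mul_const P)
  exact h.congr_deriv (by ring)

theorem gradient_identity_general
    (T R P S : ℝ)
    (xC xD yC yD : ℝ) (hden : 1 - (xC - xD) * (yC - yD) ≠ 0)
    (u : ℝ → ℝ → ℝ)
    (hu : ∀ x y, u x y = x * y * R + x * (1 - y) * S + (1 - x) * y * T +
      (1 - x) * (1 - y) * P)
    (fy : ℝ → ℝ) (hfy : ∀ x, fy x = x * (yC - yD) + yD)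
    (xe ye : ℝ) (hye : ye = fy xe)
    (uCD : ℝ)
    (huCD : uCD = ((yC - yD) * (xe * (R - S) + (1 - xe) * (T - P)) -
      (ye * (T - R) + (1 - ye) * (P - S))) / (1 - (xC - xD) * (yC - yD))) :
    HasDerivAt (fun x : ℝ => u x (fy x))
      (uCD * (1 - (xC - xD) * (yC - yD))) xe := by
  have hu_eq : u = pdPayoff R S T P := funext₂ hu
  have hfy_deriv : HasDerivAt fy (yC - yD) xe := by
    rw [show fy = fun x => x * (yC - yD) + yD from funext hfy]
    simpa using ((hasDerivAt_id' xe).mul_const (yC - yD)).add_const yD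
  rw [huCD, div_mul_cancel₀ _ hden, hye, hu_eq]
  exact hfy_deriv.pdPayoff

theorem gradient_identity
    (T R P S : ℝ) (hTR : T > R) (hRP : R > P) (hPS : P > S) (hrep : 2 * R > T + S)
    (xC xD yC yD : ℝ) (hden : 1 - (xC - xD) * (yC - yD) ≠ 0)
    (u : ℝ → ℝ → ℝ)
    (hu : ∀ x y, u x y = x * y * R + x * (1 - y) * S + (1 - x) * y * T +
      (1 - x) * (1 - y) * P)
    (fy : ℝ → ℝ) (hfy : ∀ x, fy x = x * (yC - yD) + yD)
    (xe ye : ℝ) (hye : ye = fy xe)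
    (uCD : ℝ)
    (huCD : uCD = ((yC - yD) * (xe * (R - S) + (1 - xe) * (T - P)) -
      (ye * (T - R) + (1 - ye) * (P - S))) / (1 - (xC - xD) * (yC - yD))) :
    HasDerivAt (fun x : ℝ => u x (fy x))
      (uCD * (1 - (xC - xD) * (yC - yD))) xe :=
  gradient_identity_general T R P S xC xD yC yD hden u hu fy hfy xe ye hye uCD huCD
end

section
/- Let 0 < x_C, x_D, y_C, y_D < 1 and define x_e, y_e as the equilibrium cooperation probabilities. Then the partial derivatives satisfy (∂x_e/∂x_C, ∂x_e/∂x_D, ∂y_e/∂y_C, ∂y_e/∂y_D) = (y_e, 1-y_e, x_e, 1-x_e)/(1 - (x_C - x_D)(y_C - y_D)). -/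
noncomputable def xeFun (xC xD yC yD : ℝ) : ℝ :=
  (xD + (xC - xD) * yD) / (1 - (xC - xD) * (yC - yD))

noncomputable def yeFun (xC xD yC yD : ℝ) : ℝ :=
  (yD + (yC - yD) * xD) / (1 - (xC - xD) * (yC - yD))

/-!
Along each coordinate axis `xeFun` is a quotient of two affine functions, so the quotient rule
gives its partial derivatives; after clearing denominators the numerator is the other equilibrium
probability. The partial derivatives of `yeFun` follow from those of `xeFun` by the symmetry
exchanging the two players. The common denominator `1 - (xC - xD) * (yC - yD)` is positive since
both differences lie in `(-1, 1)`.
-/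

lemma one_sub_mul_pos_of_abs_lt_one {u v : ℝ} (hu : |u| < 1) (hv : |v| < 1) : 0 < 1 - u * v := by
  have huv : |u * v| < 1 := by
    rw [abs_mul]
    exact mul_lt_one_of_nonneg_of_lt_one_left (abs_nonneg u) hu hv.le
  linarith [le_abs_self (u * v)]

lemma yeFun_eq_xeFun_swap (xC xD yC yD : ℝ) : yeFun xC xD yC yD = xeFun yC yD xC xD := by
  rw [yeFun, xeFun, mul_comm (xC - xD)]

section PartialDerivatives

variable {xC xD yC yD : ℝ}

lemma hasDerivAt_xeFun_fst (h : 1 - (xC - xD) * (yC - yD) ≠ 0) :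
    HasDerivAt (fun a => xeFun a xD yC yD)
      (yeFun xC xD yC yD / (1 - (xC - xD) * (yC - yD))) xC := by
  have hnum : HasDerivAt (fun a => xD + (a - xD) * yD) yD xC := by
    simpa using (((hasDerivAt_id xC).sub_const xD).mul_const yD).const_add xD
  have hden : HasDerivAt (fun a => 1 - (a - xD) * (yC - yD)) (-(yC - yD)) xC := by
    simpa using (((hasDerivAt_id xC).sub_const xD).mul_const (yC - yD)).const_sub 1
  refine (hnum.div hden h).congr_deriv ?_
  rw [yeFun]
  field_simp
  ring

lemma hasDerivAt_xeFun_snd (h : 1 - (xC - xD) * (yC - yD) ≠ 0) :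
    HasDerivAt (fun a => xeFun xC a yC yD)
      ((1 - yeFun xC xD yC yD) / (1 - (xC - xD) * (yC - yD))) xD := by
  have hnum : HasDerivAt (fun a => a + (xC - a) * yD) (1 - yD) xD :=
    ((hasDerivAt_id' xD).add (((hasDerivAt_id' xD).const_sub xC).mul_const yD)).congr_deriv
      (by ring)
  have hden : HasDerivAt (fun a => 1 - (xC - a) * (yC - yD)) (yC - yD) xD := by
    simpa using (((hasDerivAt_id xD).const_sub xC).mul_const (yC - yD)).const_sub 1
  refine (hnum.div hden h).congr_deriv ?_
  rw [yeFun]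
  field_simp
  ring

end PartialDerivatives

theorem equilibrium_partial_derivatives
    (xC xD yC yD : ℝ)
    (hxC : 0 < xC) (hxC1 : xC < 1) (hxD : 0 < xD) (hxD1 : xD < 1)
    (hyC : 0 < yC) (hyC1 : yC < 1) (hyD : 0 < yD) (hyD1 : yD < 1) :
    HasDerivAt (fun a => xeFun a xD yC yD)
      (yeFun xC xD yC yD / (1 - (xC - xD) * (yC - yD))) xC ∧
    HasDerivAt (fun a => xeFun xC a yC yD)
      ((1 - yeFun xC xD yC yD) / (1 - (xC - xD) * (yC - yD))) xD ∧
    HasDerivAt (fun a => yeFun xC xD a yD)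
      (xeFun xC xD yC yD / (1 - (xC - xD) * (yC - yD))) yC ∧
    HasDerivAt (fun a => yeFun xC xD yC a)
      ((1 - xeFun xC xD yC yD) / (1 - (xC - xD) * (yC - yD))) yD := by
  have hden : 1 - (xC - xD) * (yC - yD) ≠ 0 :=
    (one_sub_mul_pos_of_abs_lt_one (abs_sub_lt_of_nonneg_of_lt hxC.le hxC1 hxD.le hxD1)
      (abs_sub_lt_of_nonneg_of_lt hyC.le hyC1 hyD.le hyD1)).ne'
  have hden_swap : 1 - (yC - yD) * (xC - xD) ≠ 0 := by rwa [mul_comm]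
  refine ⟨hasDerivAt_xeFun_fst hden, hasDerivAt_xeFun_snd hden, ?_, ?_⟩
  · convert hasDerivAt_xeFun_fst hden_swap using 1
    · exact funext fun a => yeFun_eq_xeFun_swap xC xD a yD
    · rw [yeFun_eq_xeFun_swap yC yD, mul_comm (yC - yD)]
  · convert hasDerivAt_xeFun_snd hden_swap using 1
    · exact funext fun a => yeFun_eq_xeFun_swap xC xD yC a
    · rw [yeFun_eq_xeFun_swap yC yD, mul_comm (yC - yD)]
end
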